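/- Let sch_ν(i) denote the number of ν-Schröder paths with exactly i diagonal steps and Nar_ν(j) the number of ν-Dyck paths with exactly j valleys. If ν begins with a north step and ends with an east step, then N_ν(x+1) = Σ_{i≥0} sch_ν(i) x^i, where N_ν(x) = Σ_{j≥0} Nar_ν(j) x^j. -/

import Mathlib

/-- Steps of a (Schröder) lattice path: north, east, diagonal. -/
inductive Step : Type
  | N | E | D
deriving DecidableEq, Repr

/-- Total horizontal displacement of a path. -/
def eLen (p : List Step) : ℕ := p.count Step.E + p.count Step.D

/-- Total vertical displacement of a path. -/
def nLen (p : List Step) : ℕ := p.count Step.N + p.count Step.D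

/-- A lattice path uses only `N` and `E` steps. -/
def IsLatticePath (ν : List Step) : Prop := Step.D ∉ ν

/-- `colVal p x` is twice the starting height of the step of `p` crossing the vertical
strip between abscissas `x` and `x+1`, plus `1` if that step is diagonal.  Comparing these
values columnwise is equivalent to comparing the heights of the paths over each strip. -/
def colVal : List Step → ℕ → ℕ
  | [], _ => 0
  | Step.N :: p, x => colVal p x + 2
  | Step.E :: _, 0 => 0
  | Step.E :: p, x+1 => colVal p x
  | Step.D :: _, 0 => 1
  | Step.D :: p, x+1 => colVal p x + 2

/-- `π` stays weakly above `ρ` (same endpoints intended). -/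
def WeaklyAbove (π ρ : List Step) : Prop := ∀ x, colVal ρ x ≤ colVal π x

/-- Replace every peak (consecutive `NE`) of a path by a diagonal step; applied to `ν`
this gives the path `μ` of the large ν-Schröder path definition. -/
def cutPeaks : List Step → List Step
  | [] => []
  | Step.N :: Step.E :: p => Step.D :: cutPeaks p
  | s :: p => s :: cutPeaks p

/-- A ν-Dyck path: an `N,E` path with the same endpoints as `ν` staying weakly above `ν`. -/
def IsNuDyck (ν π : List Step) : Prop :=
  Step.D ∉ π ∧ eLen π = eLen ν ∧ nLen π = nLen ν ∧ WeaklyAbove π ν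

/-- A (small) ν-Schröder path: an `N,E,D` path with the same endpoints as `ν` staying weakly
above `ν` (this automatically forbids diagonal steps on the ν-diagonal). -/
def IsSmallSchroder (ν π : List Step) : Prop :=
  eLen π = eLen ν ∧ nLen π = nLen ν ∧ WeaklyAbove π ν

/-- A large ν-Schröder path: an `N,E,D` path with the same endpoints as `ν` staying weakly
above the path obtained from `ν` by replacing each peak by a diagonal step. -/
def IsLargeSchroder (ν π : List Step) : Prop :=
  eLen π = eLen ν ∧ nLen π = nLen ν ∧ WeaklyAbove π (cutPeaks ν)

/-- Number of peaks (consecutive `NE` pairs). -/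
def peaks (p : List Step) : ℕ := (p.zip p.tail).count (Step.N, Step.E)

/-- Number of valleys (consecutive `EN` pairs). -/
def valleys (p : List Step) : ℕ := (p.zip p.tail).count (Step.E, Step.N)

/-- Lattice points at which valleys of a path occur (starting the path at `(x,y)`). -/
def valleyPts : List Step → ℕ → ℕ → List (ℕ × ℕ)
  | [], _, _ => []
  | Step.E :: p, x, y =>
      (if p.head? = some Step.N then [(x+1, y)] else []) ++ valleyPts p (x+1) y
  | Step.N :: p, x, y => valleyPts p x (y+1)
  | Step.D :: p, x, y => valleyPts p (x+1) (y+1)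

/-- Lattice points at which high peaks (peaks strictly above `ν`) of a path occur. -/
def highPeakPts (ν : List Step) : List Step → ℕ → ℕ → List (ℕ × ℕ)
  | [], _, _ => []
  | Step.N :: p, x, y =>
      (if p.head? = some Step.E ∧ colVal ν x < 2*(y+1) then [(x, y+1)] else []) ++
        highPeakPts ν p x (y+1)
  | Step.E :: p, x, y => highPeakPts ν p (x+1) y
  | Step.D :: p, x, y => highPeakPts ν p (x+1) (y+1)

/-- Number of high peaks of `π` relative to `ν`. -/
def highPeaks (ν π : List Step) : ℕ := (highPeakPts ν π 0 0).length

/-- j-th ν-Narayana number: number of ν-Dyck paths with exactly `j` valleys. -/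
noncomputable def Nar (ν : List Step) (j : ℕ) : ℕ :=
  Nat.card {π : List Step // IsNuDyck ν π ∧ valleys π = j}

/-- Number of small ν-Schröder paths with exactly `i` diagonal steps. -/
noncomputable def schNum (ν : List Step) (i : ℕ) : ℕ :=
  Nat.card {π : List Step // IsSmallSchroder ν π ∧ π.count Step.D = i}

/-- `lowH ν x` is the lowest height of a point of `ν` at abscissa `x`. -/
def lowH : List Step → ℕ → ℕ
  | _, 0 => 0
  | [], _+1 => 0
  | Step.N :: p, x+1 => lowH p (x+1) + 1
  | Step.E :: p, x+1 => lowH p x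
  | Step.D :: p, x+1 => lowH p x + 1

/-- The lowest lattice path from `(0,0)` to `(b,a)` weakly above the line segment
from `(0,0)` to `(b,a)`. -/
def nuAB (a b : ℕ) : List Step :=
  (List.range b).flatMap (fun x =>
    List.replicate (((x+1)*a + b - 1)/b - (x*a + b - 1)/b) Step.N ++ [Step.E])

/-- Number of large rational `(a,b)`-Schröder paths with `i` diagonal steps. -/
noncomputable def largeCount (a b i : ℕ) : ℕ :=
  Nat.card {π : List Step // IsLargeSchroder (nuAB a b) π ∧ π.count Step.D = i}

/-- Number of small rational `(a,b)`-Schröder paths with `i` diagonal steps. -/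
noncomputable def smallCount (a b i : ℕ) : ℕ :=
  Nat.card {π : List Step // IsSmallSchroder (nuAB a b) π ∧ π.count Step.D = i}

/-- Binomial coefficient with an integer lower entry (zero when negative). -/
def chooseZ (n : ℕ) (k : ℤ) : ℕ := if 0 ≤ k then n.choose k.toNat else 0

/-- The region weakly above `ν` in the rectangle `[0,b] × [0,a]`. -/
def InRegion (ν : List Step) (p : ℕ × ℕ) : Prop :=
  p.1 ≤ eLen ν ∧ p.2 ≤ nLen ν ∧ lowH ν p.1 ≤ p.2

/-- Two points of the region are ν-incompatible if one is strictly southwest of the other and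
the rectangle they span lies in the region (equivalently its bottom-right corner does). -/
def Incompat (ν : List Step) (p q : ℕ × ℕ) : Prop :=
  ((p.1 < q.1 ∧ p.2 < q.2) ∨ (q.1 < p.1 ∧ q.2 < p.2)) ∧
    InRegion ν (max p.1 q.1, min p.2 q.2)

/-- A ν-binary tree: a maximal set of pairwise ν-compatible points of the region. -/
def IsBinaryTree (ν : List Step) (T : Finset (ℕ × ℕ)) : Prop :=
  (∀ p ∈ T, InRegion ν p) ∧ (∀ p ∈ T, ∀ q ∈ T, ¬ Incompat ν p q) ∧
    ∀ r, InRegion ν r → (∀ p ∈ T, ¬ Incompat ν r p) → r ∈ T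

/-- A ν-Schröder tree: pairwise ν-compatible points of the region containing the root
`(0,a)` and meeting every row and every column. -/
def IsSchroderTree (ν : List Step) (T : Finset (ℕ × ℕ)) : Prop :=
  (∀ p ∈ T, InRegion ν p) ∧ (∀ p ∈ T, ∀ q ∈ T, ¬ Incompat ν p q) ∧
    (0, nLen ν) ∈ T ∧ (∀ y ≤ nLen ν, ∃ p ∈ T, p.2 = y) ∧ (∀ x ≤ eLen ν, ∃ p ∈ T, p.1 = x)

/-- One contraction step: delete a node, provided the result is still a ν-Schröder tree. -/
def ContractStep (ν : List Step) (T T' : Finset (ℕ × ℕ)) : Prop :=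
  ∃ q ∈ T, T' = T.erase q ∧ IsSchroderTree ν T'

/-- `p` is a leaf of the (plane tree associated to the) node set `T`: no node strictly below
it in its column and none strictly to its right in its row. -/
def IsLeafIn (T : Finset (ℕ × ℕ)) (p : ℕ × ℕ) : Prop :=
  (∀ q ∈ T, ¬(q.1 = p.1 ∧ q.2 < p.2)) ∧ (∀ q ∈ T, ¬(q.2 = p.2 ∧ p.1 < q.1))

/-- Starting points of vertical runs and ending points of horizontal runs of `ν`. -/
def leafPts (ν : List Step) : Finset (ℕ × ℕ) :=
  (valleyPts ν 0 0).toFinset ∪ (if ν.head? = some Step.N then {((0 : ℕ), (0 : ℕ))} else ∅) ∪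
    (if ν.getLast? = some Step.E then {(eLen ν, nLen ν)} else ∅)

/-- `horizNu ν x y`: maximal number of east steps that can be placed starting at `(x,y)`
before crossing `ν` (staying within the bounding rectangle). -/
def horizNu (ν : List Step) (x y : ℕ) : ℕ :=
  ((Finset.Icc 1 (eLen ν - x)).filter (fun k => lowH ν (x + k) ≤ y)).card

/-- No `N` step of the given path (started at `(x,y)`) has initial point with
`horizNu`-value `h`. -/
def noNAt (ν : List Step) (h : ℕ) : List Step → ℕ → ℕ → Prop
  | [], _, _ => True
  | Step.N :: p, x, y => horizNu ν x y ≠ h ∧ noNAt ν h p x (y+1)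
  | Step.E :: p, x, y => noNAt ν h p (x+1) y
  | Step.D :: p, x, y => noNAt ν h p (x+1) (y+1)

/-- Right contraction: replace a consecutive `EN` pair (a valley) by a `D` step. -/
def RightC (μ lam : List Step) : Prop :=
  ∃ p q, μ = p ++ Step.E :: Step.N :: q ∧ lam = p ++ Step.D :: q

/-- Left contraction: delete an `E` step together with the most recent preceding `N` step
whose initial point has the same `horizNu` statistic as the initial point of the `E` step,
shift the intermediate subpath, and place a `D` step at the initial point of the `N` step. -/
def LeftC (ν μ lam : List Step) : Prop :=
  ∃ p m q, μ = p ++ Step.N :: (m ++ Step.E :: q) ∧ lam = p ++ Step.D :: (m ++ q) ∧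
    horizNu ν (eLen p) (nLen p)
      = horizNu ν (eLen (p ++ Step.N :: m)) (nLen (p ++ Step.N :: m)) ∧
    noNAt ν (horizNu ν (eLen (p ++ Step.N :: m)) (nLen (p ++ Step.N :: m)))
      m (eLen p) (nLen p + 1)

/-- Diagonal contraction: delete an `E` step ending at the initial point `r` of a `D` step,
together with the most recent preceding `N` step whose initial point `s` satisfies
`horizNu s = horizNu r`, shift the intermediate subpath, and place a `D` step at `s`. -/
def DiagC (ν μ lam : List Step) : Prop :=
  ∃ p m q, μ = p ++ Step.N :: (m ++ Step.E :: Step.D :: q) ∧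
    lam = p ++ Step.D :: (m ++ Step.D :: q) ∧
    horizNu ν (eLen p) (nLen p)
      = horizNu ν (eLen (p ++ Step.N :: m) + 1) (nLen (p ++ Step.N :: m)) ∧
    noNAt ν (horizNu ν (eLen (p ++ Step.N :: m) + 1) (nLen (p ++ Step.N :: m)))
      m (eLen p) (nLen p + 1)

/-- Cover relation of the contraction poset of ν-Schröder paths. -/
def Covers (ν μ lam : List Step) : Prop :=
  IsSmallSchroder ν μ ∧ IsSmallSchroder ν lam ∧
    (RightC μ lam ∨ LeftC ν μ lam ∨ DiagC ν μ lam)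

/-- The Morse matching: `σ` (having a `D` step preceded by no valley) is matched with the
path `π` obtained by replacing the first such `D` step by `EN`. -/
def MorseM (ν : List Step) : Set (List Step × List Step) :=
  { z | ∃ p q, Step.D ∉ p ∧ valleys p = 0 ∧
      z.2 = p ++ Step.D :: q ∧ z.1 = p ++ Step.E :: Step.N :: q ∧ IsSmallSchroder ν z.2 }

/-- Twice the area between a small ν-Schröder path and `ν`. -/
def area2 (ν π : List Step) : ℕ :=
  ∑ x ∈ Finset.range (eLen ν), (colVal π x - colVal ν x)

/-- An `(I,J̄)`-forest: increasing, non-crossing arcs. -/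
def IsIJForest (I J : Finset ℕ) (F : Finset (ℕ × ℕ)) : Prop :=
  (∀ a ∈ F, a.1 ∈ I ∧ a.2 ∈ J ∧ a.1 < a.2) ∧
    (∀ a ∈ F, ∀ a' ∈ F, ¬(a.1 < a'.1 ∧ a'.1 < a.2 ∧ a.2 < a'.2))

/-- A covering `(I,J̄)`-forest: contains the arc `(1,n)` and has no isolated node. -/
def IsCoveringForest (n : ℕ) (I J : Finset ℕ) (F : Finset (ℕ × ℕ)) : Prop :=
  IsIJForest I J F ∧ (1, n) ∈ F ∧
    (∀ i ∈ I, ∃ a ∈ F, a.1 = i) ∧ (∀ j ∈ J, ∃ a ∈ F, a.2 = j)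

/-- The lattice path read off from the interleaving of `I` and `J̄` (elements `2,…,n-1`,
`E` for elements of `I`, `N` for the others). -/
def nuOf (n : ℕ) (I : Finset ℕ) : List Step :=
  (List.range' 2 (n - 2)).map (fun k => if k ∈ I then Step.E else Step.N)

/-!
Replacing a diagonal step of a path by a valley `EN` lowers it by half a unit over one column.
Since ν has no diagonal steps, its heights over columns are integers, so a path with `N, E, D`
steps stays above ν exactly when its expansion (every `D` replaced by `EN`) does. Hence the
ν-Schröder paths are fibred over the ν-Dyck paths, the fibre over `π` consisting of the paths
obtained by contracting any subset of the valleys of `π` into diagonal steps. Weighting a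
Schröder path by `x ^ #D`, the fibre over `π` thus has weight `(x + 1) ^ valleys π`, and summing
over `π` gives `N_ν(x + 1)`.
-/

instance : Fintype Step :=
  ⟨{Step.N, Step.E, Step.D}, by intro a; cases a <;> simp⟩

lemma sum_range_natCard_smul {α M : Type*} [AddCommMonoid M] {P : α → Prop}
    (hP : {a | P a}.Finite) (f : α → ℕ) {n : ℕ} (hf : ∀ a, P a → f a < n) (g : ℕ → M) :
    ∑ j ∈ Finset.range n, Nat.card {a // P a ∧ f a = j} • g j
      = ∑ a ∈ hP.toFinset, g (f a) := by
  classical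
  rw [← Finset.sum_fiberwise_of_maps_to (g := f) (t := Finset.range n) fun a ha => by
    simpa using hf a (by simpa using ha)]
  refine Finset.sum_congr rfl fun j _ => ?_
  rw [Finset.sum_congr rfl fun a ha => by rw [(Finset.mem_filter.mp ha).2], Finset.sum_const]
  congr 1
  rw [← Fintype.card_coe, ← Nat.card_eq_fintype_card]
  exact Nat.card_congr (Equiv.subtypeEquivRight fun a => by simp)

lemma count_N_add_count_E_add_count_D (p : List Step) :
    p.count Step.N + p.count Step.E + p.count Step.D = p.length := by
  induction p with
  | nil => rfl
  | cons a p ih => cases a <;> simp <;> omega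

lemma finite_setOf_eLen_nLen (a b : ℕ) : {p : List Step | eLen p = a ∧ nLen p = b}.Finite := by
  refine (List.finite_length_le Step (a + b)).subset fun p ⟨ha, hb⟩ => ?_
  have := count_N_add_count_E_add_count_D p
  simp only [Set.mem_ofPred_eq, eLen, nLen] at ha hb ⊢
  omega

lemma valleys_cons_cons (a b : Step) (p : List Step) :
    valleys (a :: b :: p) = valleys (b :: p) + if (a, b) = (Step.E, Step.N) then 1 else 0 := by
  simp [valleys, List.count_cons]

lemma valleys_le_count_E (p : List Step) : valleys p ≤ p.count Step.E := by
  induction p with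
  | nil => simp [valleys]
  | cons a p ih =>
    cases p with
    | nil => simp [valleys]
    | cons b q =>
      rw [valleys_cons_cons, List.count_cons (b := a)]
      cases a <;> cases b <;> simp at ih ⊢ <;> omega

lemma valleys_N_cons (p : List Step) : valleys (Step.N :: p) = valleys p := by
  cases p <;> simp [valleys]

def expandDiag : List Step → List Step
  | [] => []
  | Step.D :: p => Step.E :: Step.N :: expandDiag p
  | s :: p => s :: expandDiag p

lemma expandDiag_of_D_not_mem {p : List Step} (hp : Step.D ∉ p) : expandDiag p = p := by
  induction p with
  | nil => rfl
  | cons a p ih =>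
    simp only [List.mem_cons, not_or] at hp
    cases a <;> simp_all [expandDiag]

lemma D_not_mem_expandDiag (p : List Step) : Step.D ∉ expandDiag p := by
  induction p with
  | nil => simp [expandDiag]
  | cons a p ih => cases a <;> simp [expandDiag, ih]

lemma eLen_expandDiag (p : List Step) : eLen (expandDiag p) = eLen p := by
  induction p with
  | nil => rfl
  | cons a p ih => cases a <;> simp_all [expandDiag, eLen] <;> omega

lemma nLen_expandDiag (p : List Step) : nLen (expandDiag p) = nLen p := by
  induction p with
  | nil => rfl
  | cons a p ih => cases a <;> simp_all [expandDiag, nLen] <;> omega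

lemma colVal_expandDiag (p : List Step) (x : ℕ) :
    colVal (expandDiag p) x = 2 * (colVal p x / 2) := by
  induction p generalizing x with
  | nil => simp [expandDiag, colVal]
  | cons a p ih =>
    cases a with
    | N => simp only [expandDiag, colVal, ih]; omega
    | E => cases x <;> simp [expandDiag, colVal, ih]
    | D =>
      cases x with
      | zero => simp [expandDiag, colVal]
      | succ x => simp only [expandDiag, colVal, ih]; omega

lemma weaklyAbove_expandDiag_iff {ν : List Step} (hν : Step.D ∉ ν) (p : List Step) :
    WeaklyAbove (expandDiag p) ν ↔ WeaklyAbove p ν := by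
  refine forall_congr' fun x => ?_
  have hνx := colVal_expandDiag ν x
  rw [expandDiag_of_D_not_mem hν] at hνx
  rw [colVal_expandDiag]
  omega

lemma isSmallSchroder_iff_isNuDyck_expandDiag {ν : List Step} (hν : Step.D ∉ ν)
    (p : List Step) : IsSmallSchroder ν p ↔ IsNuDyck ν (expandDiag p) := by
  simp only [IsSmallSchroder, IsNuDyck, eLen_expandDiag, nLen_expandDiag,
    weaklyAbove_expandDiag_iff hν, D_not_mem_expandDiag, not_false_eq_true, true_and]

def diagPreimages : List Step → List (List Step)
  | [] => [[]]
  | Step.N :: p => (diagPreimages p).map (Step.N :: ·)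
  | Step.D :: _ => []
  | [Step.E] => [[Step.E]]
  | Step.E :: Step.N :: p =>
      (diagPreimages p).map (Step.D :: ·) ++ (diagPreimages p).map (Step.E :: Step.N :: ·)
  | Step.E :: Step.E :: p => (diagPreimages (Step.E :: p)).map (Step.E :: ·)
  | Step.E :: Step.D :: _ => []

lemma expandDiag_of_mem_diagPreimages {π σ : List Step} (h : σ ∈ diagPreimages π) :
    expandDiag σ = π := by
  induction π using diagPreimages.induct generalizing σ with
  | case1 => simp_all [diagPreimages, expandDiag]
  | case2 p ih | case6 p ih =>
    obtain ⟨τ, hτ, rfl⟩ := List.mem_map.mp h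
    simp [expandDiag, ih hτ]
  | case3 | case7 => simp [diagPreimages] at h
  | case4 => simp_all [diagPreimages, expandDiag]
  | case5 p ih =>
    simp only [diagPreimages, List.mem_append, List.mem_map] at h
    rcases h with ⟨τ, hτ, rfl⟩ | ⟨τ, hτ, rfl⟩ <;> simp [expandDiag, ih hτ]

lemma mem_diagPreimages_of_expandDiag_eq {π σ : List Step} (h : expandDiag σ = π) :
    σ ∈ diagPreimages π := by
  induction π using diagPreimages.induct generalizing σ with
  | case1 | case2 _ _ | case6 _ _ =>
    rcases σ with _ | ⟨_ | _ | _, τ⟩ <;> simp_all [expandDiag, diagPreimages]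
  | case3 | case7 => exact absurd (h ▸ D_not_mem_expandDiag σ) (by simp)
  | case4 | case5 _ _ =>
    rcases σ with _ | ⟨_ | _ | _, _ | ⟨_ | _ | _, τ⟩⟩ <;> simp_all [expandDiag, diagPreimages]

lemma mem_diagPreimages {π σ : List Step} : σ ∈ diagPreimages π ↔ expandDiag σ = π :=
  ⟨expandDiag_of_mem_diagPreimages, mem_diagPreimages_of_expandDiag_eq⟩

lemma nodup_diagPreimages (π : List Step) : (diagPreimages π).Nodup := by
  induction π using diagPreimages.induct with
  | case1 | case3 | case4 | case7 => simp [diagPreimages]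
  | case2 p ih | case6 p ih => exact ih.map List.cons_injective
  | case5 p ih =>
    refine (ih.map List.cons_injective).append
      (ih.map (List.cons_injective.comp List.cons_injective)) ?_
    simp [List.disjoint_left]

lemma sum_map_pow_count_D_diagPreimages {R : Type*} [CommSemiring R] (x : R) {π : List Step}
    (hπ : Step.D ∉ π) :
    ((diagPreimages π).map fun σ => x ^ σ.count Step.D).sum = (x + 1) ^ valleys π := by
  induction π using diagPreimages.induct with
  | case1 | case4 => simp [diagPreimages, valleys]
  | case2 p ih =>
    simp_all [diagPreimages, Function.comp_def, valleys_N_cons]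
  | case3 | case7 => simp at hπ
  | case5 p ih =>
    simp_all [diagPreimages, Function.comp_def, valleys_cons_cons, valleys_N_cons, pow_succ,
      List.sum_map_mul_right, mul_add, add_comm]
  | case6 p ih =>
    simp_all [diagPreimages, Function.comp_def, valleys_cons_cons]

lemma valleys_le_eLen_of_isNuDyck {ν π : List Step} (hπ : IsNuDyck ν π) :
    valleys π ≤ eLen ν := by
  have := valleys_le_count_E π
  rw [← hπ.2.1, eLen]
  omega

lemma count_D_le_eLen_of_isSmallSchroder {ν σ : List Step} (hσ : IsSmallSchroder ν σ) :
    σ.count Step.D ≤ eLen ν := by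
  rw [← hσ.1, eLen]
  omega

lemma finite_setOf_isNuDyck (ν : List Step) : {π | IsNuDyck ν π}.Finite :=
  (finite_setOf_eLen_nLen _ _).subset fun _ h => ⟨h.2.1, h.2.2.1⟩

lemma finite_setOf_isSmallSchroder (ν : List Step) : {σ | IsSmallSchroder ν σ}.Finite :=
  (finite_setOf_eLen_nLen _ _).subset fun _ h => ⟨h.1, h.2.1⟩

lemma sum_pow_count_D_isSmallSchroder {R : Type*} [CommSemiring R] {ν : List Step}
    (hν : Step.D ∉ ν) (x : R) :
    ∑ σ ∈ (finite_setOf_isSmallSchroder ν).toFinset, x ^ σ.count Step.D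
      = ∑ π ∈ (finite_setOf_isNuDyck ν).toFinset, (x + 1) ^ valleys π := by
  classical
  rw [← Finset.sum_fiberwise_of_maps_to (g := expandDiag)
    (t := (finite_setOf_isNuDyck ν).toFinset) fun σ hσ => by
    simpa [← isSmallSchroder_iff_isNuDyck_expandDiag hν] using hσ]
  refine Finset.sum_congr rfl fun π hπ => ?_
  have hπ' : IsNuDyck ν π := by simpa using hπ
  have hfiber : {σ ∈ (finite_setOf_isSmallSchroder ν).toFinset | expandDiag σ = π}
      = (diagPreimages π).toFinset := by
    ext σ
    simp only [Finset.mem_filter, Set.Finite.mem_toFinset, Set.mem_ofPred_eq,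
      List.mem_toFinset, mem_diagPreimages, isSmallSchroder_iff_isNuDyck_expandDiag hν]
    exact and_iff_right_of_imp fun h => h ▸ hπ'
  rw [hfiber, List.sum_toFinset _ (nodup_diagPreimages π)]
  exact sum_map_pow_count_D_diagPreimages x hπ'.1

theorem narayana_shift_eq_schroder_general (ν : List Step) (hν : IsLatticePath ν) (x : ℕ) :
    ∑ j ∈ Finset.range (eLen ν + 1), Nar ν j * (x + 1)^j
      = ∑ i ∈ Finset.range (eLen ν + 1), schNum ν i * x^i := by
  simp only [Nar, schNum, ← smul_eq_mul]
  rw [sum_range_natCard_smul (finite_setOf_isNuDyck ν) valleys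
      fun _ hπ => Nat.lt_succ_of_le (valleys_le_eLen_of_isNuDyck hπ),
    sum_range_natCard_smul (finite_setOf_isSmallSchroder ν) _
      fun _ hσ => Nat.lt_succ_of_le (count_D_le_eLen_of_isSmallSchroder hσ),
    sum_pow_count_D_isSmallSchroder hν]

/-- If ν begins with a north step and ends with an east step, then
`N_ν(x+1) = Σ_i sch_ν(i) xⁱ`, where `N_ν` is the ν-Narayana polynomial. -/
theorem narayana_shift_eq_schroder (ν : List Step) (hν : IsLatticePath ν)
    (hhead : ν.head? = some Step.N) (hlast : ν.getLast? = some Step.E) (x : ℕ) :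
    ∑ j ∈ Finset.range (eLen ν + 1), Nar ν j * (x + 1)^j
      = ∑ i ∈ Finset.range (eLen ν + 1), schNum ν i * x^i :=
  narayana_shift_eq_schroder_general ν hν x
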